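/- Let G = (V, E) be a graph with a linear order < on E, F = (V, A_f) a spanning forest of G, A_i ⊆ E_i(F) a set of internally active edges, A_e ⊆ E_e(F) a set of externally active edges, and A = (A_f \ A_i) ∪ A_e. Then the spanning subgraph (V, A) satisfies |A_i| = k((V,A)) − k(G) and |A_e| = |A| − |V| + k((V,A)), where k denotes the number of connected components. -/

import Mathlib

open Finset

attribute [local instance] Classical.propDecidable

/-- A multigraph on vertex type `V` with edge index type `E` is given by a map
`ends : E → Sym2 V` (loops and parallel edges are allowed).  For an edge subset
`A ⊆ E`, `edgeGraph ends A` is the simple graph on `V` whose adjacency is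
witnessed by some edge of `A`; it determines the connected components of the
spanning subgraph `(V, A)`. -/
def edgeGraph {V E : Type} (ends : E → Sym2 V) (A : Finset E) : SimpleGraph V where
  Adj a b := a ≠ b ∧ ∃ e ∈ A, ends e = s(a, b)
  symm := by
    constructor
    rintro a b ⟨hab, e, he, hs⟩
    exact ⟨Ne.symm hab, e, he, by rw [hs, Sym2.eq_swap]⟩
  loopless := by constructor; rintro a ⟨h, -⟩; exact h rfl

/-- `kc ends A` is the number of connected components of the spanning subgraph `(V, A)`. -/
noncomputable def kc {V E : Type} (ends : E → Sym2 V) (A : Finset E) : ℕ :=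
  Nat.card (edgeGraph ends A).ConnectedComponent

/-- `(V, A)` is a spanning forest of `(V, E)`: it is a forest
(`|A| + k((V,A)) = |V|`, which rules out loops, parallel edges and cycles)
with as many connected components as the whole graph. -/
def IsSpanningForest {V E : Type} [Fintype V] [Fintype E] (ends : E → Sym2 V)
    (A : Finset E) : Prop :=
  A.card + kc ends A = Fintype.card V ∧ kc ends A = kc ends Finset.univ

/-- `F - e + f`. -/
def swapEdge {E : Type} [DecidableEq E] (A : Finset E) (e f : E) : Finset E :=
  insert f (A.erase e)

/-- `e` is internally active in the spanning forest `(V, A)`. -/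
def InternallyActive {V E : Type} [Fintype V] [Fintype E] [DecidableEq E] [LinearOrder E]
    (ends : E → Sym2 V) (A : Finset E) (e : E) : Prop :=
  e ∈ A ∧ ¬ ∃ f, f ∉ A ∧ e < f ∧ IsSpanningForest ends (swapEdge A e f)

/-- `f` is externally active in the spanning forest `(V, A)`. -/
def ExternallyActive {V E : Type} [Fintype V] [Fintype E] [DecidableEq E] [LinearOrder E]
    (ends : E → Sym2 V) (A : Finset E) (f : E) : Prop :=
  f ∉ A ∧ ¬ ∃ e, e ∈ A ∧ f < e ∧ IsSpanningForest ends (swapEdge A e f)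

/-- The set `E_i(F)` of internally active edges of the spanning forest `F = (V, A)`. -/
noncomputable def intAct {V E : Type} [Fintype V] [Fintype E] [DecidableEq E] [LinearOrder E]
    (ends : E → Sym2 V) (A : Finset E) : Finset E :=
  Finset.univ.filter (InternallyActive ends A)

/-- The set `E_e(F)` of externally active edges of the spanning forest `F = (V, A)`. -/
noncomputable def extAct {V E : Type} [Fintype V] [Fintype E] [DecidableEq E] [LinearOrder E]
    (ends : E → Sym2 V) (A : Finset E) : Finset E :=
  Finset.univ.filter (ExternallyActive ends A)

/-! Adding an edge to `(V, A)` lowers the number of components by one if its ends lie in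
different components and leaves it unchanged otherwise. Hence `|V| ≤ |A| + k(V, A)`, with equality
exactly for forests, and deleting `s` edges from a forest raises `k` by exactly `s`. Both identities
therefore reduce to `k(V, A) = k(V, A_f \ A_i)`, i.e. to the ends of every externally active `f`
being joined in `A_f \ A_i`. They are joined in `A_f`, since `F` is spanning. If they were not
joined in `A_f \ A_i`, then, every edge of a forest being a bridge, a single `e ∈ A_i` would
already separate them in `A_f - e`; but then `F - e + f` is a spanning forest, contradicting the
activity of `e` if `e < f` and that of `f` if `f < e`. -/

open SimpleGraph

lemma Sym2.exists_eq_mk {α : Type*} (z : Sym2 α) : ∃ x y, z = s(x, y) :=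
  z.ind fun x y => ⟨x, y, rfl⟩

section EdgeGraph

variable {V E : Type} (ends : E → Sym2 V)

lemma edgeGraph_mono {A B : Finset E} (h : A ⊆ B) : edgeGraph ends A ≤ edgeGraph ends B :=
  fun _ _ ⟨hab, e, he, hs⟩ => ⟨hab, e, h he, hs⟩

lemma edgeGraph_empty : edgeGraph ends ∅ = ⊥ := by
  ext a b
  simp [edgeGraph]

lemma kc_empty [Fintype V] : kc ends (∅ : Finset E) = Fintype.card V := by
  rw [kc, edgeGraph_empty, ← Nat.card_eq_fintype_card]
  refine (Nat.card_eq_of_bijective _ ⟨fun u v h => ?_, Quot.mk_surjective⟩).symm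
  exact reachable_bot.1 (ConnectedComponent.eq.1 h)

lemma kc_anti [Finite V] {A B : Finset E} (h : A ⊆ B) : kc ends B ≤ kc ends A :=
  ConnectedComponent.card_le_card_of_le (edgeGraph_mono ends h)

variable [DecidableEq E]

lemma reachable_insert {A : Finset E} {f : E} {x y u v : V} (hf : ends f = s(x, y))
    (h : (edgeGraph ends (insert f A)).Reachable u v) :
    (edgeGraph ends A).Reachable u v ∨
      ((edgeGraph ends A).Reachable u x ∧ (edgeGraph ends A).Reachable y v) ∨
      ((edgeGraph ends A).Reachable u y ∧ (edgeGraph ends A).Reachable x v) := by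
  obtain ⟨w⟩ := h
  induction w with
  | nil => exact Or.inl .rfl
  | @cons a b c hadj p ih =>
    obtain ⟨hne, e, he, hs⟩ := hadj
    rcases Finset.mem_insert.1 he with rfl | heA
    · rw [hf, Sym2.eq_iff] at hs
      rcases hs with ⟨rfl, rfl⟩ | ⟨rfl, rfl⟩ <;> rcases ih with h | ⟨-, h⟩ | ⟨-, h⟩ <;>
        first
          | exact Or.inl h
          | exact Or.inr (Or.inl ⟨.rfl, h⟩)
          | exact Or.inr (Or.inr ⟨.rfl, h⟩)
    · have hab : (edgeGraph ends A).Reachable a b := Adj.reachable ⟨hne, e, heA, hs⟩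
      rcases ih with h | ⟨h, h'⟩ | ⟨h, h'⟩
      exacts [Or.inl (hab.trans h), Or.inr (Or.inl ⟨hab.trans h, h'⟩),
        Or.inr (Or.inr ⟨hab.trans h, h'⟩)]

lemma kc_insert_of_reachable [Finite V] {A : Finset E} {f : E} {x y : V}
    (hf : ends f = s(x, y)) (hxy : (edgeGraph ends A).Reachable x y) :
    kc ends (insert f A) = kc ends A := by
  let m := ConnectedComponent.map (Hom.ofLE (edgeGraph_mono ends (Finset.subset_insert f A)))
  refine le_antisymm (kc_anti ends (Finset.subset_insert f A))
    (Nat.card_le_card_of_injective m ?_)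
  refine ConnectedComponent.ind₂ fun u v h => ConnectedComponent.eq.2 ?_
  rcases reachable_insert ends hf (ConnectedComponent.eq.1 h) with h | ⟨hux, hyv⟩ | ⟨huy, hxv⟩
  exacts [h, hux.trans (hxy.trans hyv), huy.trans (hxy.symm.trans hxv)]

lemma kc_insert_add_one_of_not_reachable [Finite V] {A : Finset E} {f : E} {x y : V}
    (hf : ends f = s(x, y)) (hxy : ¬ (edgeGraph ends A).Reachable x y) :
    kc ends (insert f A) + 1 = kc ends A := by
  have hle := edgeGraph_mono ends (Finset.subset_insert f A)
  set cy := (edgeGraph ends A).connectedComponentMk y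
  have hx : (edgeGraph ends A).connectedComponentMk x ≠ cy :=
    fun h => hxy (ConnectedComponent.eq.1 h)
  have hadj : (edgeGraph ends (insert f A)).Reachable x y :=
    Adj.reachable ⟨fun h => hxy (h ▸ .rfl), f, Finset.mem_insert_self f A, hf⟩
  -- the component of `y` is the only one that merges with another, namely that of `x`
  let g : {c // c ≠ cy} → (edgeGraph ends (insert f A)).ConnectedComponent :=
    fun c => c.1.map (Hom.ofLE hle)
  have hg : Function.Bijective g := by
    constructor
    · rintro ⟨c, hc⟩ ⟨d, hd⟩ h
      induction c using ConnectedComponent.ind with | h u => ?_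
      induction d using ConnectedComponent.ind with | h v => ?_
      refine Subtype.ext (ConnectedComponent.eq.2 ?_)
      rcases reachable_insert ends hf (ConnectedComponent.eq.1 h) with h | ⟨-, hyv⟩ | ⟨huy, -⟩
      exacts [h, absurd (ConnectedComponent.eq.2 hyv.symm) hd,
        absurd (ConnectedComponent.eq.2 huy) hc]
    · refine ConnectedComponent.ind fun u => ?_
      by_cases hu : (edgeGraph ends A).connectedComponentMk u = cy
      · exact ⟨⟨_, hx⟩, ConnectedComponent.eq.2
          (hadj.trans ((ConnectedComponent.eq.1 hu).mono hle).symm)⟩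
      · exact ⟨⟨_, hu⟩, rfl⟩
  rw [kc, kc, ← Nat.card_eq_of_bijective g hg, ← Finite.card_option,
    Nat.card_congr (Equiv.optionSubtypeNe cy)]

lemma kc_le_kc_insert_add_one [Finite V] (A : Finset E) (f : E) :
    kc ends A ≤ kc ends (insert f A) + 1 := by
  obtain ⟨x, y, hf⟩ := (ends f).exists_eq_mk
  by_cases hxy : (edgeGraph ends A).Reachable x y
  · rw [kc_insert_of_reachable ends hf hxy]
    omega
  · rw [kc_insert_add_one_of_not_reachable ends hf hxy]

lemma kc_le_kc_union_add_card [Finite V] (B C : Finset E) :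
    kc ends B ≤ kc ends (B ∪ C) + C.card := by
  induction C using Finset.induction_on with
  | empty => simp
  | insert f C hf ih =>
    rw [Finset.union_insert, Finset.card_insert_of_notMem hf]
    have := kc_le_kc_insert_add_one ends (B ∪ C) f
    omega

lemma card_le_card_add_kc [Fintype V] (A : Finset E) : Fintype.card V ≤ A.card + kc ends A := by
  have := kc_le_kc_union_add_card ends ∅ A
  rw [kc_empty, Finset.empty_union] at this
  omega

lemma kc_union_of_forall_reachable [Finite V] {B C : Finset E}
    (hC : ∀ f ∈ C, ∀ x y, ends f = s(x, y) → (edgeGraph ends B).Reachable x y) :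
    kc ends (B ∪ C) = kc ends B := by
  induction C using Finset.induction_on with
  | empty => simp
  | insert f C hf ih =>
    obtain ⟨x, y, hxy⟩ := (ends f).exists_eq_mk
    have hreach := (hC f (Finset.mem_insert_self f C) x y hxy).mono
      (edgeGraph_mono ends (Finset.subset_union_left (s₂ := C)))
    rw [Finset.union_insert, kc_insert_of_reachable ends hxy hreach,
      ih fun g hg => hC g (Finset.mem_insert_of_mem hg)]

end EdgeGraph

section Forest

variable {V E : Type} [Fintype V] [DecidableEq E] (ends : E → Sym2 V)

def IsForest (A : Finset E) : Prop :=
  A.card + kc ends A = Fintype.card V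

lemma IsForest.kc_sdiff {A S : Finset E} (hA : IsForest ends A) (hS : S ⊆ A) :
    kc ends (A \ S) = kc ends A + S.card := by
  have hle := kc_le_kc_union_add_card ends (A \ S) S
  rw [Finset.sdiff_union_of_subset hS] at hle
  have hge := card_le_card_add_kc ends (A \ S)
  have := Finset.card_sdiff_add_card_eq_card hS
  unfold IsForest at hA
  omega

lemma IsForest.kc_erase {A : Finset E} (hA : IsForest ends A) {e : E} (he : e ∈ A) :
    kc ends (A.erase e) = kc ends A + 1 := by
  rw [Finset.erase_eq, hA.kc_sdiff ends (Finset.singleton_subset_iff.2 he), Finset.card_singleton]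

lemma IsForest.not_reachable_erase {A : Finset E} (hA : IsForest ends A) {e : E} (he : e ∈ A)
    {u v : V} (huv : ends e = s(u, v)) : ¬ (edgeGraph ends (A.erase e)).Reachable u v := by
  intro hreach
  have := kc_insert_of_reachable ends huv hreach
  rw [Finset.insert_erase he, hA.kc_erase ends he] at this
  omega

lemma IsForest.exists_not_reachable_erase {A S : Finset E} (hA : IsForest ends A) (hS : S ⊆ A)
    {x y : V} (hxy : (edgeGraph ends A).Reachable x y)
    (hS_sep : ¬ (edgeGraph ends (A \ S)).Reachable x y) :
    ∃ e ∈ S, ¬ (edgeGraph ends (A.erase e)).Reachable x y := by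
  induction S using Finset.induction_on with
  | empty => exact absurd hxy (by simpa using hS_sep)
  | insert e S he ih =>
    have heA : e ∈ A := hS (Finset.mem_insert_self e S)
    by_cases hxyS : (edgeGraph ends (A \ S)).Reachable x y
    · refine ⟨e, Finset.mem_insert_self e S, fun hxy_e => ?_⟩
      obtain ⟨u, v, huv⟩ := (ends e).exists_eq_mk
      rw [Finset.sdiff_insert] at hS_sep
      rw [← Finset.insert_erase (Finset.mem_sdiff.2 ⟨heA, he⟩)] at hxyS
      have hmono := edgeGraph_mono ends
        (Finset.erase_subset_erase e (Finset.sdiff_subset (s := A) (t := S)))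
      -- `x` and `y` are joined in `A \ S` only through `e`, so a path avoiding `e` in `A - e`
      -- would join the ends of `e` there
      refine hA.not_reachable_erase ends heA huv ?_
      rcases reachable_insert ends huv hxyS with h | ⟨hxu, hvy⟩ | ⟨hxv, huy⟩
      · exact absurd h hS_sep
      · exact ((hxu.mono hmono).symm.trans hxy_e).trans (hvy.mono hmono).symm
      · exact ((huy.mono hmono).trans hxy_e.symm).trans (hxv.mono hmono)
    · obtain ⟨e', he', h⟩ := ih ((Finset.subset_insert e S).trans hS) hxyS
      exact ⟨e', Finset.mem_insert_of_mem he', h⟩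

lemma isSpanningForest_swapEdge [Fintype E] {A : Finset E} (hA : IsSpanningForest ends A)
    {e f : E} (he : e ∈ A) (hf : f ∉ A) {x y : V} (hxy : ends f = s(x, y))
    (hsep : ¬ (edgeGraph ends (A.erase e)).Reachable x y) :
    IsSpanningForest ends (swapEdge A e f) := by
  have hkc : kc ends (swapEdge A e f) = kc ends A := by
    have := kc_insert_add_one_of_not_reachable ends hxy hsep
    rw [IsForest.kc_erase ends hA.1 he] at this
    rw [swapEdge]
    omega
  have hcard : (swapEdge A e f).card = A.card := by
    rw [swapEdge, Finset.card_insert_of_notMem (fun h => hf (Finset.mem_of_mem_erase h)),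
      Finset.card_erase_add_one he]
  exact ⟨hcard ▸ hkc ▸ hA.1, hkc ▸ hA.2⟩

lemma intAct_subset [Fintype E] [LinearOrder E] (A : Finset E) : intAct ends A ⊆ A :=
  fun _ he => (Finset.mem_filter.1 he).2.1

lemma reachable_sdiff_of_externallyActive [Fintype E] [LinearOrder E] {Af Ai : Finset E}
    (hF : IsSpanningForest ends Af) (hi : Ai ⊆ intAct ends Af) {f : E}
    (hf : ExternallyActive ends Af f) {x y : V} (hxy : ends f = s(x, y)) :
    (edgeGraph ends (Af \ Ai)).Reachable x y := by
  have hiAf : Ai ⊆ Af := hi.trans (intAct_subset ends Af)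
  have hreach : (edgeGraph ends Af).Reachable x y := by
    by_contra hsep
    have := kc_insert_add_one_of_not_reachable ends hxy hsep
    have := kc_anti ends (Finset.subset_univ (insert f Af))
    have := hF.2
    omega
  by_contra hsep
  obtain ⟨e, heAi, hsep_e⟩ := IsForest.exists_not_reachable_erase ends hF.1 hiAf hreach hsep
  have heAf := hiAf heAi
  have hswap := isSpanningForest_swapEdge ends hF heAf hf.1 hxy hsep_e
  rcases lt_or_gt_of_ne (ne_of_mem_of_not_mem heAf hf.1) with hlt | hgt
  · exact (Finset.mem_filter.1 (hi heAi)).2.2 ⟨f, hf.1, hlt, hswap⟩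
  · exact hf.2 ⟨e, heAf, hgt, hswap⟩

end Forest

/-- For `A = (A_f \ A_i) ∪ A_e`:
`|A_i| = k((V,A)) − k(G)` and `|A_e| = |A| − |V| + k((V,A))`
(stated in subtraction-free form). -/
theorem activity_counts {V E : Type} [Fintype V] [Fintype E] [DecidableEq E]
    [LinearOrder E] (ends : E → Sym2 V) (Af Ai Ae : Finset E)
    (hF : IsSpanningForest ends Af)
    (hi : Ai ⊆ intAct ends Af) (he : Ae ⊆ extAct ends Af) :
    Ai.card + kc ends Finset.univ = kc ends ((Af \ Ai) ∪ Ae) ∧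
    Ae.card + Fintype.card V = ((Af \ Ai) ∪ Ae).card + kc ends ((Af \ Ai) ∪ Ae) := by
  have hiAf : Ai ⊆ Af := hi.trans (intAct_subset ends Af)
  have hActive : ∀ f ∈ Ae, ExternallyActive ends Af f :=
    fun f hf => (Finset.mem_filter.1 (he hf)).2
  have hkc : kc ends ((Af \ Ai) ∪ Ae) = kc ends Af + Ai.card := by
    rw [kc_union_of_forall_reachable ends fun f hf x y hxy =>
        reachable_sdiff_of_externallyActive ends hF hi (hActive f hf) hxy,
      IsForest.kc_sdiff ends hF.1 hiAf]
  have hdisj : Disjoint (Af \ Ai) Ae :=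
    Finset.disjoint_right.2 fun f hf hf' => (hActive f hf).1 (Finset.mem_sdiff.1 hf').1
  have hcard := Finset.card_sdiff_add_card_eq_card hiAf
  rw [Finset.card_union_of_disjoint hdisj]
  obtain ⟨hforest, hspan⟩ := hF
  constructor <;> omega
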